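/- arXiv:1104.3832 — 3 statements merged into one kernel-verified Lean document; each statement's English description precedes it below -/
import Mathlib

section
/- Let H be a real inner product space with inner product ⟨·,·⟩ and norm ‖·‖, let T ∈ (0,+∞], and let w : [0,T) → H be differentiable with derivative w'. Let ν ∈ [0,∞), g ∈ [0,∞), δ ∈ [0,∞), and let a, ε : [0,T) → [0,∞) be continuous functions such that for every t ∈ [0,T): ⟨w'(t), w(t)⟩ ≤ −ν‖w(t)‖² + a(t)‖w(t)‖² + g‖w(t)‖³ + ε(t)‖w(t)‖, and ‖w'(t)‖ ≤ ε(t) whenever w(t) = 0; assume also ‖w(0)‖ ≤ δ. Let Tc ∈ (0,T] and let R : [0,Tc) → [0,∞) be continuous with d⁺R/dt(t) ≥ −νR(t) + a(t)R(t) + gR(t)² + ε(t) for all t ∈ [0,Tc) and R(0) ≥ δ. Then ‖w(t)‖ ≤ R(t) for all t ∈ [0,Tc). -/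
/-!
Put `u = ‖w‖ - R`. Where `u > 0` we have `‖w‖ > R ≥ 0`, so `w ≠ 0` and `‖w‖` has right derivative
`⟪w, w'⟫ / ‖w‖`. Subtracting the two control inequalities, the `ε` terms cancel and the difference
of the right-hand sides is `(-ν + a + g (‖w‖ + R)) u`, at most `L u` on a compact interval `[0, t₁]`.
Comparing `u` with the barriers `θ e^{(L+1)t}`, `θ > 0`, a fencing argument for Dini derivatives
gives `u ≤ 0`.
-/

open Filter Set

/-- Right upper Dini derivative: `limsup_{h → 0⁺} (f(t+h) − f(t))/h`, valued in `EReal`. -/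
noncomputable def diniUpper (f : ℝ → ℝ) (t : ℝ) : EReal :=
  limsup (fun h : ℝ => (((f (t + h) - f t) / h : ℝ) : EReal)) (nhdsWithin 0 (Ioi 0))

open Topology RealInnerProductSpace

theorem HasDerivWithinAt.norm {E : Type*} [NormedAddCommGroup E] [InnerProductSpace ℝ E]
    {f : ℝ → E} {f' : E} {s : Set ℝ} {x : ℝ} (hf : HasDerivWithinAt f f' s x) (h0 : f x ≠ 0) :
    HasDerivWithinAt (fun y => ‖f y‖) (⟪f x, f'⟫ / ‖f x‖) s x := by
  have h := hf.norm_sq.sqrt (by positivity)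
  simp only [Real.sqrt_sq (norm_nonneg _)] at h
  convert h using 1
  field_simp

theorem HasDerivWithinAt.eventually_slope_lt {f : ℝ → ℝ} {f' x r : ℝ}
    (hf : HasDerivWithinAt f f' (Ioi x) x) (hr : f' < r) : ∀ᶠ z in 𝓝[>] x, slope f x z < r :=
  ((hasDerivWithinAt_iff_tendsto_slope' (lt_irrefl x)).1 hf).eventually_lt_const hr

theorem HasDerivWithinAt.eventually_slope_norm_lt {E : Type*} [NormedAddCommGroup E]
    [NormedSpace ℝ E] {f : ℝ → E} {f' : E} {x r : ℝ} (hf : HasDerivWithinAt f f' (Ioi x) x)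
    (hr : ‖f'‖ < r) : ∀ᶠ z in 𝓝[>] x, slope (fun t => ‖f t‖) x z < r := by
  have hlim := ((hasDerivWithinAt_iff_tendsto_slope' (lt_irrefl x)).1 hf).norm
  filter_upwards [hlim.eventually_lt_const hr, self_mem_nhdsWithin] with z hz hxz
  have hpos : 0 < z - x := sub_pos.2 hxz
  refine lt_of_le_of_lt ?_ hz
  rw [slope_def_field, slope, norm_smul, vsub_eq_sub, norm_inv, Real.norm_of_nonneg hpos.le,
    inv_mul_eq_div]
  exact div_le_div_of_nonneg_right (norm_sub_norm_le _ _) hpos.le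

theorem frequently_lt_slope_of_lt_diniUpper {f : ℝ → ℝ} {x c : ℝ}
    (h : (c : EReal) < diniUpper f x) : ∃ᶠ z in 𝓝[>] x, c < slope f x z := by
  have hfreq : ∃ᶠ h in 𝓝[>] (0 : ℝ), (c : EReal) < (((f (x + h) - f x) / h : ℝ) : EReal) :=
    frequently_lt_of_lt_limsup (by isBoundedDefault) h
  have hmap : map (x + ·) (𝓝[>] (0 : ℝ)) = 𝓝[>] x := by simp
  rw [← hmap, frequently_map]
  refine hfreq.mono fun h hh => ?_
  simpa [slope_def_field] using (EReal.coe_lt_coe_iff.1 hh)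

theorem frequently_slope_sub_lt {f g : ℝ → ℝ} {x d c r : ℝ}
    (hf : ∀ r, d < r → ∀ᶠ z in 𝓝[>] x, slope f x z < r) (hg : (c : EReal) ≤ diniUpper g x)
    (hr : d - c < r) : ∃ᶠ z in 𝓝[>] x, slope (fun t => f t - g t) x z < r := by
  obtain ⟨η, hη, rfl⟩ : ∃ η, 0 < η ∧ r = d - c + 2 * η := ⟨(r - (d - c)) / 2, by linarith, by ring⟩
  have hgη : ((c - η : ℝ) : EReal) < diniUpper g x :=
    lt_of_lt_of_le (EReal.coe_lt_coe_iff.2 (by linarith)) hg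
  refine ((frequently_lt_slope_of_lt_diniUpper hgη).and_eventually
    (hf (d + η) (by linarith))).mono fun z ⟨hgz, hfz⟩ => ?_
  have hsub : slope (fun t => f t - g t) x z = slope f x z - slope g x z := by
    simp only [slope_def_field]
    ring
  rw [hsub]
  linarith

/-- Grönwall's lemma with zero initial value, for Dini derivatives:
`∀ r, c < r → ∃ᶠ z in 𝓝[>] x, slope u x z < r` says that the right lower Dini derivative of `u`
at `x` is at most `c`. -/
theorem nonpos_of_liminf_slope_right_le_mul {u : ℝ → ℝ} {a b L : ℝ}
    (hu : ContinuousOn u (Icc a b)) (ha : u a ≤ 0)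
    (hfin : ∀ x ∈ Ico a b, ∃ c, ∀ r, c < r → ∃ᶠ z in 𝓝[>] x, slope u x z < r)
    (hpos : ∀ x ∈ Ico a b, 0 < u x → ∀ r, L * u x < r → ∃ᶠ z in 𝓝[>] x, slope u x z < r) :
    ∀ x ∈ Icc a b, u x ≤ 0 := by
  choose! c hc using hfin
  set f' : ℝ → ℝ := fun x => if 0 < u x then L * u x else c x
  have hf' : ∀ x ∈ Ico a b, ∀ r, f' x < r → ∃ᶠ z in 𝓝[>] x, slope u x z < r := by
    intro x hx r hr
    by_cases hux : 0 < u x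
    · exact hpos x hx hux r (by simpa [f', hux] using hr)
    · exact hc x hx r (by simpa [f', hux] using hr)
  have hbarrier : ∀ θ > 0, ∀ x ∈ Icc a b, u x ≤ θ * Real.exp ((L + 1) * (x - a)) := by
    intro θ hθ
    refine image_le_of_liminf_slope_right_lt_deriv_boundary hu hf' (by simpa using ha.trans hθ.le)
      (B := fun x => θ * Real.exp ((L + 1) * (x - a)))
      (B' := fun x => (L + 1) * (θ * Real.exp ((L + 1) * (x - a)))) (fun x => ?_) ?_
    · exact ((((hasDerivAt_id x).sub_const a).const_mul (L + 1)).exp.const_mul θ).congr_deriv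
        (by simp only [id, mul_one]; ring)
    · intro x _ hux
      have hux0 : 0 < u x := hux ▸ by positivity
      simp only [f', if_pos hux0, ← hux]
      linarith
  intro x hx
  by_contra! hux
  have hE := Real.exp_pos ((L + 1) * (x - a))
  have h := hbarrier (u x / (2 * Real.exp ((L + 1) * (x - a)))) (by positivity) x hx
  rw [div_mul_eq_div_div, div_mul_cancel₀ _ hE.ne'] at h
  linarith

theorem Icc_subset_setOf_lt {t : ℝ} {T : EReal} (h : (t : EReal) < T) :
    Icc 0 t ⊆ {τ : ℝ | 0 ≤ τ ∧ (τ : EReal) < T} :=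
  fun _ hτ => ⟨hτ.1, lt_of_le_of_lt (EReal.coe_le_coe_iff.2 hτ.2) h⟩

theorem frequently_slope_norm_sub_lt {H : Type*} [NormedAddCommGroup H] [InnerProductSpace ℝ H]
    {w : ℝ → H} {w' : H} {R : ℝ → ℝ} {x c d r : ℝ} (hw : HasDerivWithinAt w w' (Ioi x) x)
    (hwx : w x ≠ 0) (hineq : ⟪w', w x⟫ ≤ ‖w x‖ * d) (hR : (c : EReal) ≤ diniUpper R x)
    (hr : d - c < r) : ∃ᶠ z in 𝓝[>] x, slope (fun t => ‖w t‖ - R t) x z < r := by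
  have hd : ⟪w x, w'⟫ / ‖w x‖ ≤ d := by
    rw [div_le_iff₀ (norm_pos_iff.2 hwx), real_inner_comm]
    linarith
  exact frequently_slope_sub_lt (fun r' hr' => (hw.norm hwx).eventually_slope_lt (hd.trans_lt hr'))
    hR hr

theorem stmt4_general {H : Type*} [NormedAddCommGroup H] [InnerProductSpace ℝ H]
    (T : EReal) (w w' : ℝ → H)
    (hw : ∀ t : ℝ, 0 ≤ t → (t : EReal) < T →
      HasDerivWithinAt w (w' t) {τ : ℝ | 0 ≤ τ ∧ (τ : EReal) < T} t)
    (ν g δ : ℝ) (a ε : ℝ → ℝ)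
    (hac : ContinuousOn a {t : ℝ | 0 ≤ t ∧ (t : EReal) < T})
    (hineq : ∀ t : ℝ, 0 ≤ t → (t : EReal) < T →
      (inner ℝ (w' t) (w t) : ℝ) ≤
        -ν * ‖w t‖ ^ 2 + a t * ‖w t‖ ^ 2 + g * ‖w t‖ ^ 3 + ε t * ‖w t‖)
    (hw0 : ‖w 0‖ ≤ δ)
    (Tc : EReal) (hTcT : Tc ≤ T) (R : ℝ → ℝ)
    (hRc : ContinuousOn R {t : ℝ | 0 ≤ t ∧ (t : EReal) < Tc})
    (hRnn : ∀ t : ℝ, 0 ≤ t → (t : EReal) < Tc → 0 ≤ R t)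
    (hR : ∀ t : ℝ, 0 ≤ t → (t : EReal) < Tc →
      ((-ν * R t + a t * R t + g * R t ^ 2 + ε t : ℝ) : EReal) ≤ diniUpper R t)
    (hR0 : δ ≤ R 0) :
    ∀ t : ℝ, 0 ≤ t → (t : EReal) < Tc → ‖w t‖ ≤ R t := by
  intro t₁ ht₁ ht₁Tc
  have hITc := Icc_subset_setOf_lt ht₁Tc
  have hIT := Icc_subset_setOf_lt (ht₁Tc.trans_le hTcT)
  have hwI : ∀ x ∈ Ico 0 t₁, HasDerivWithinAt w (w' x) (Ioi x) x := fun x hx =>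
    (hw x hx.1 (hIT (Ico_subset_Icc_self hx)).2).mono_of_mem_nhdsWithin <| mem_of_superset
      (Ioo_mem_nhdsGT hx.2) fun z hz => hIT ⟨hx.1.trans hz.1.le, hz.2.le⟩
  have hwc : ContinuousOn (fun t => ‖w t‖) (Icc 0 t₁) := fun x hx =>
    ((hw x hx.1 (hIT hx).2).continuousWithinAt.mono hIT).norm
  obtain ⟨L, hL⟩ := isCompact_Icc.bddAbove_image
    (f := fun x => -ν + a x + g * (‖w x‖ + R x)) (K := Icc 0 t₁)
    ((continuousOn_const.add (hac.mono hIT)).add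
      (continuousOn_const.mul (hwc.add (hRc.mono hITc))))
  have hfin : ∀ x ∈ Ico 0 t₁, ∃ c, ∀ r, c < r →
      ∃ᶠ z in 𝓝[>] x, slope (fun t => ‖w t‖ - R t) x z < r := fun x hx =>
    ⟨_, fun r hr => frequently_slope_sub_lt (fun r' => (hwI x hx).eventually_slope_norm_lt)
      (hR x hx.1 (hITc (Ico_subset_Icc_self hx)).2) hr⟩
  have hpos : ∀ x ∈ Ico 0 t₁, 0 < ‖w x‖ - R x → ∀ r, L * (‖w x‖ - R x) < r →
      ∃ᶠ z in 𝓝[>] x, slope (fun t => ‖w t‖ - R t) x z < r := by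
    intro x hx hux r hr
    have hxI := Ico_subset_Icc_self hx
    have hwx : w x ≠ 0 := norm_pos_iff.1 <| by linarith [hRnn x hx.1 (hITc hxI).2]
    refine frequently_slope_norm_sub_lt (d := -ν * ‖w x‖ + a x * ‖w x‖ + g * ‖w x‖ ^ 2 + ε x)
      (hwI x hx) hwx ((hineq x hx.1 (hIT hxI).2).trans_eq (by ring)) (hR x hx.1 (hITc hxI).2) ?_
    calc _ = (-ν + a x + g * (‖w x‖ + R x)) * (‖w x‖ - R x) := by ring
      _ ≤ L * (‖w x‖ - R x) := mul_le_mul_of_nonneg_right (hL ⟨x, hxI, rfl⟩) hux.le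
      _ < r := hr
  exact sub_nonpos.1 <| nonpos_of_liminf_slope_right_le_mul (hwc.sub (hRc.mono hITc))
    (sub_nonpos.2 (hw0.trans hR0)) hfin hpos t₁ (right_mem_Icc.2 ht₁)

/-- Quantitative core of Proposition 4.4 of the paper: any nonnegative continuous
solution `R` of the control inequalities bounds `‖w(t)‖` on `[0,Tc)`. -/
theorem stmt4 {H : Type*} [NormedAddCommGroup H] [InnerProductSpace ℝ H]
    (T : EReal) (hT : 0 < T) (w w' : ℝ → H)
    (hw : ∀ t : ℝ, 0 ≤ t → (t : EReal) < T →
      HasDerivWithinAt w (w' t) {τ : ℝ | 0 ≤ τ ∧ (τ : EReal) < T} t)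
    (ν g δ : ℝ) (hν : 0 ≤ ν) (hg : 0 ≤ g) (hδ : 0 ≤ δ) (a ε : ℝ → ℝ)
    (ha : ∀ t : ℝ, 0 ≤ t → (t : EReal) < T → 0 ≤ a t)
    (hε : ∀ t : ℝ, 0 ≤ t → (t : EReal) < T → 0 ≤ ε t)
    (hac : ContinuousOn a {t : ℝ | 0 ≤ t ∧ (t : EReal) < T})
    (hεc : ContinuousOn ε {t : ℝ | 0 ≤ t ∧ (t : EReal) < T})
    (hineq : ∀ t : ℝ, 0 ≤ t → (t : EReal) < T →
      (inner ℝ (w' t) (w t) : ℝ) ≤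
        -ν * ‖w t‖ ^ 2 + a t * ‖w t‖ ^ 2 + g * ‖w t‖ ^ 3 + ε t * ‖w t‖)
    (hzero : ∀ t : ℝ, 0 ≤ t → (t : EReal) < T → w t = 0 → ‖w' t‖ ≤ ε t)
    (hw0 : ‖w 0‖ ≤ δ)
    (Tc : EReal) (hTc : 0 < Tc) (hTcT : Tc ≤ T) (R : ℝ → ℝ)
    (hRc : ContinuousOn R {t : ℝ | 0 ≤ t ∧ (t : EReal) < Tc})
    (hRnn : ∀ t : ℝ, 0 ≤ t → (t : EReal) < Tc → 0 ≤ R t)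
    (hR : ∀ t : ℝ, 0 ≤ t → (t : EReal) < Tc →
      ((-ν * R t + a t * R t + g * R t ^ 2 + ε t : ℝ) : EReal) ≤ diniUpper R t)
    (hR0 : δ ≤ R 0) :
    ∀ t : ℝ, 0 ≤ t → (t : EReal) < Tc → ‖w t‖ ≤ R t :=
  stmt4_general T w w' hw ν g δ a ε hac hineq hw0 Tc hTcT R hRc hRnn hR hR0
end

section
/- Let ν ∈ [0,∞), g ∈ (0,∞), r₀ ∈ [0,∞). Define Tc ∈ (0,+∞] as follows: Tc := +∞ if ν > 0 and r₀ ≤ ν/g; Tc := −(1/ν)·log(1 − ν/(g·r₀)) if ν > 0 and r₀ > ν/g; Tc := 1/(g·r₀) if ν = 0 and r₀ > 0; Tc := +∞ if ν = 0 and r₀ = 0. Let T ∈ (0,+∞] and let W : [0,T) → [0,∞) be a continuous function with W(0) ≤ r₀ and d₊W/dt(t) ≤ −ν·W(t) + g·W(t)² for all t ∈ [0,T). Then for every t ∈ [0, min(T,Tc)) one has W(t) ≤ r₀·e^{−νt}/(1 − g·r₀·e_ν(t)). -/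
open Filter Set

/-- `e_ν(t) := (1 − e^{−νt})/ν` for `ν > 0`, and `e_0(t) := t`. -/
noncomputable def eNu (ν t : ℝ) : ℝ :=
  if ν = 0 then t else (1 - Real.exp (-ν * t)) / ν

/-- The critical time of Lemma 5.1/Proposition 5.2 of the paper. -/
noncomputable def Tc5 (ν g r₀ : ℝ) : EReal :=
  if ν = 0 then
    (if r₀ = 0 then ⊤ else ((1 / (g * r₀) : ℝ) : EReal))
  else if r₀ ≤ ν / g then ⊤
  else ((-(1 / ν) * Real.log (1 - ν / (g * r₀)) : ℝ) : EReal)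

/-- Right lower Dini derivative: `liminf_{h → 0⁺} (f(t+h) − f(t))/h`, valued in `EReal`. -/
noncomputable def diniLower (f : ℝ → ℝ) (t : ℝ) : EReal :=
  liminf (fun h : ℝ => (((f (t + h) - f t) / h : ℝ) : EReal)) (nhdsWithin 0 (Ioi 0))

open Topology

/-!
`R(t) = r₀ e^{-νt} / (1 - g r₀ e_ν(t))` solves the Bernoulli equation `R' = -νR + gR²` with
`R(0) = r₀`, and its denominator stays positive exactly up to `Tc`. On `[0, t]` the curve `R` is
bounded, so `y ↦ -νy + gy²` is Lipschitz just above it; hence `R + ε e^{Lt}` is a strict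
supersolution that `W` cannot cross, and `ε → 0` gives `W ≤ R`.
-/

theorem image_le_of_liminf_slope_right_le_ode_solution {f R : ℝ → ℝ} {F : ℝ → ℝ → ℝ}
    {a b δ K : ℝ} (hδ : 0 < δ) (hf : ContinuousOn f (Icc a b))
    (hf' : ∀ x ∈ Ico a b, ∀ r, F x (f x) < r → ∃ᶠ z in 𝓝[>] x, slope f x z < r)
    (hRc : ContinuousOn R (Icc a b))
    (hR' : ∀ x ∈ Ico a b, HasDerivWithinAt R (F x (R x)) (Ici x) x)
    (hF : ∀ x ∈ Ico a b, ∀ y ∈ Icc (R x) (R x + δ), F x y ≤ F x (R x) + K * (y - R x))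
    (ha : f a ≤ R a) : ∀ ⦃x⦄, x ∈ Icc a b → f x ≤ R x := by
  intro x hx
  set L := |K| + 1
  have hperturbed : ∀ ε, 0 < ε → ε * Real.exp (L * (b - a)) ≤ δ →
      f x ≤ R x + ε * Real.exp (L * (x - a)) := by
    intro ε hε hεδ
    have hexp : ∀ y, HasDerivAt (fun y => ε * Real.exp (L * (y - a)))
        (ε * Real.exp (L * (y - a)) * L) y := fun y => by
      simpa [mul_assoc] using (((hasDerivAt_id y).sub_const a).const_mul L).exp.const_mul ε
    have ha' : f a ≤ R a + ε * Real.exp (L * (a - a)) := by simpa using ha.trans (by linarith)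
    have hBc : ContinuousOn (fun y => R y + ε * Real.exp (L * (y - a))) (Icc a b) :=
      hRc.add (by fun_prop)
    refine image_le_of_liminf_slope_right_lt_deriv_boundary' hf hf' ha' hBc
      (fun y hy => (hR' y hy).add (hexp y).hasDerivWithinAt) ?_ hx
    intro y hy hfy
    set c := ε * Real.exp (L * (y - a))
    have hc : 0 < c := by positivity
    have hcδ : c ≤ δ := hεδ.trans' <| mul_le_mul_of_nonneg_left
      (Real.exp_le_exp.2 (mul_le_mul_of_nonneg_left (by linarith [hy.2]) (by positivity))) hε.le
    calc F y (f y) ≤ F y (R y) + K * c := by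
          simpa [hfy] using hF y hy (R y + c) ⟨by linarith, by linarith⟩
      _ < F y (R y) + c * L := by nlinarith [le_abs_self K]
  have hlim : Tendsto (fun ε => R x + ε * Real.exp (L * (x - a))) (𝓝[>] 0) (𝓝 (R x)) := by
    have : Continuous fun ε => R x + ε * Real.exp (L * (x - a)) := by fun_prop
    simpa using (this.tendsto 0).mono_left nhdsWithin_le_nhds
  refine ge_of_tendsto hlim ?_
  filter_upwards [Ioo_mem_nhdsGT (by positivity : 0 < δ / Real.exp (L * (b - a)))] with ε hε
  exact hperturbed ε hε.1 ((lt_div_iff₀ (Real.exp_pos _)).1 hε.2).le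

theorem frequently_slope_lt_of_diniLower_lt {f : ℝ → ℝ} {x r : ℝ} (h : diniLower f x < r) :
    ∃ᶠ z in 𝓝[>] x, slope f x z < r := by
  have hmap : map (x + ·) (𝓝[>] (0 : ℝ)) = 𝓝[>] x := by simp
  rw [← hmap, frequently_map]
  refine (frequently_lt_of_liminf_lt (by isBoundedDefault) h).mono fun h hlt => ?_
  rw [slope_def_field, add_sub_cancel_left]
  exact_mod_cast hlt

lemma eNu_zero (ν : ℝ) : eNu ν 0 = 0 := by
  unfold eNu
  split_ifs <;> simp

lemma hasDerivAt_eNu (ν t : ℝ) : HasDerivAt (eNu ν) (Real.exp (-ν * t)) t := by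
  rcases eq_or_ne ν 0 with rfl | hν
  · have h : eNu 0 = id := funext fun s => if_pos rfl
    simpa [h] using hasDerivAt_id t
  · have h : eNu ν = fun s => (1 - Real.exp (-ν * s)) / ν := funext fun s => if_neg hν
    rw [h]
    refine ((((hasDerivAt_id t).const_mul (-ν)).exp).const_sub 1).div_const ν |>.congr_deriv ?_
    field_simp
    simp

lemma one_sub_mul_eNu_pos {ν g r₀ t : ℝ} (hν : 0 ≤ ν) (hg : 0 < g) (ht : 0 ≤ t)
    (htc : (t : EReal) < Tc5 ν g r₀) : 0 < 1 - g * r₀ * eNu ν t := by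
  rcases hν.eq_or_lt with rfl | hν
  · rcases eq_or_ne r₀ 0 with rfl | hr
    · simp
    simp only [Tc5, if_true, if_neg hr, EReal.coe_lt_coe_iff] at htc
    simp only [eNu, if_true, sub_pos]
    rcases hr.lt_or_gt with hr | hr
    · nlinarith [mul_neg_of_pos_of_neg hg hr]
    · rwa [lt_div_iff₀ (by positivity), mul_comm] at htc
  have he := Real.exp_pos (-ν * t)
  have he1 : Real.exp (-ν * t) ≤ 1 := Real.exp_le_one_iff.2 (by nlinarith)
  rw [eNu, if_neg hν.ne', ← mul_div_assoc, sub_pos, div_lt_one hν]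
  by_cases hr : r₀ ≤ ν / g
  · have hgr : g * r₀ ≤ ν := by rwa [le_div_iff₀ hg, mul_comm] at hr
    nlinarith [mul_nonneg (sub_nonneg.2 hgr) (sub_nonneg.2 he1)]
  · have hgr : ν < g * r₀ := by rwa [not_le, div_lt_iff₀ hg, mul_comm] at hr
    simp only [Tc5, if_neg hν.ne', if_neg hr, EReal.coe_lt_coe_iff] at htc
    have hlog : Real.log (1 - ν / (g * r₀)) < -ν * t := by
      have := mul_lt_mul_of_pos_left htc hν
      rw [← mul_assoc, mul_neg, mul_one_div_cancel hν.ne', neg_one_mul] at this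
      linarith
    have hexp : 1 - ν / (g * r₀) < Real.exp (-ν * t) := by
      rwa [Real.log_lt_iff_lt_exp (by rw [sub_pos, div_lt_one (by linarith)]; exact hgr)] at hlog
    rw [sub_lt_comm, lt_div_iff₀ (by linarith)] at hexp
    linarith

noncomputable def bernoulliSolution (ν g r₀ t : ℝ) : ℝ :=
  r₀ * Real.exp (-ν * t) / (1 - g * r₀ * eNu ν t)

lemma bernoulliSolution_zero (ν g r₀ : ℝ) : bernoulliSolution ν g r₀ 0 = r₀ := by
  simp [bernoulliSolution, eNu_zero]

lemma hasDerivAt_bernoulliSolution {ν g r₀ t : ℝ} (ht : 1 - g * r₀ * eNu ν t ≠ 0) :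
    HasDerivAt (bernoulliSolution ν g r₀)
      (-ν * bernoulliSolution ν g r₀ t + g * bernoulliSolution ν g r₀ t ^ 2) t := by
  have hnum := (((hasDerivAt_id t).const_mul (-ν)).exp).const_mul r₀
  have hden := ((hasDerivAt_eNu ν t).const_mul (g * r₀)).const_sub 1
  refine (hnum.div hden ht).congr_deriv ?_
  simp only [bernoulliSolution, id]
  field_simp
  ring

lemma quadratic_le_add_mul_sub {ν g M x : ℝ} (hν : 0 ≤ ν) (hg : 0 ≤ g) (hxM : x ≤ M) :
    ∀ y ∈ Icc x (x + 1),
      -ν * y + g * y ^ 2 ≤ -ν * x + g * x ^ 2 + g * (2 * M + 1) * (y - x) := by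
  rintro y ⟨hxy, hyx⟩
  -- the difference of the two sides is `(y - x) (ν + g (2 M + 1 - y - x))`
  nlinarith [mul_nonneg (sub_nonneg.2 hxy) hν,
    mul_nonneg (sub_nonneg.2 hxy) (mul_nonneg hg (by linarith : 0 ≤ 2 * M + 1 - y - x))]

theorem stmt6_general (ν g r₀ : ℝ) (hν : 0 ≤ ν) (hg : 0 < g)
    (T : EReal) (W : ℝ → ℝ)
    (hWc : ContinuousOn W {t : ℝ | 0 ≤ t ∧ (t : EReal) < T})
    (hW0 : W 0 ≤ r₀)
    (hW : ∀ t : ℝ, 0 ≤ t → (t : EReal) < T →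
      diniLower W t ≤ ((-ν * W t + g * W t ^ 2 : ℝ) : EReal)) :
    ∀ t : ℝ, 0 ≤ t → (t : EReal) < min T (Tc5 ν g r₀) →
      W t ≤ r₀ * Real.exp (-ν * t) / (1 - g * r₀ * eNu ν t) := by
  intro t ht htlt
  obtain ⟨htT, htc⟩ := lt_min_iff.mp htlt
  have hIcc : ∀ s ∈ Icc 0 t, 0 ≤ s ∧ (s : EReal) < T ∧ (s : EReal) < Tc5 ν g r₀ :=
    fun s hs =>
      have hst : (s : EReal) ≤ t := EReal.coe_le_coe_iff.2 hs.2
      ⟨hs.1, hst.trans_lt htT, hst.trans_lt htc⟩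
  set R := bernoulliSolution ν g r₀
  have hR : ∀ s ∈ Icc 0 t, HasDerivAt R (-ν * R s + g * R s ^ 2) s := fun s hs =>
    hasDerivAt_bernoulliSolution (one_sub_mul_eNu_pos hν hg hs.1 (hIcc s hs).2.2).ne'
  have hRc : ContinuousOn R (Icc 0 t) := fun s hs => (hR s hs).continuousAt.continuousWithinAt
  obtain ⟨M, hM⟩ := isCompact_Icc.bddAbove_image hRc
  refine image_le_of_liminf_slope_right_le_ode_solution (F := fun _ y => -ν * y + g * y ^ 2)
    (K := g * (2 * M + 1)) one_pos (hWc.mono fun s hs => ⟨hs.1, (hIcc s hs).2.1⟩) ?_ hRc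
    (fun s hs => (hR s (Ico_subset_Icc_self hs)).hasDerivWithinAt) ?_
    (hW0.trans_eq (bernoulliSolution_zero ν g r₀).symm) ⟨ht, le_rfl⟩
  · intro s hs r hr
    have hsT := (hIcc s (Ico_subset_Icc_self hs)).2.1
    exact frequently_slope_lt_of_diniLower_lt ((hW s hs.1 hsT).trans_lt (by exact_mod_cast hr))
  · exact fun s hs =>
      quadratic_le_add_mul_sub hν hg.le (hM (mem_image_of_mem R (Ico_subset_Icc_self hs)))

/-- Scalar quantitative content of Proposition 5.2 of the paper: any nonnegative
continuous subsolution of `W' ≤ −νW + gW²` with `W(0) ≤ r₀` is bounded by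
`r₀ e^{−νt}/(1 − g r₀ e_ν(t))` up to time `min(T, Tc)`. -/
theorem stmt6 (ν g r₀ : ℝ) (hν : 0 ≤ ν) (hg : 0 < g) (hr : 0 ≤ r₀)
    (T : EReal) (hT : 0 < T) (W : ℝ → ℝ)
    (hWc : ContinuousOn W {t : ℝ | 0 ≤ t ∧ (t : EReal) < T})
    (hWnn : ∀ t : ℝ, 0 ≤ t → (t : EReal) < T → 0 ≤ W t)
    (hW0 : W 0 ≤ r₀)
    (hW : ∀ t : ℝ, 0 ≤ t → (t : EReal) < T →
      diniLower W t ≤ ((-ν * W t + g * W t ^ 2 : ℝ) : EReal)) :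
    ∀ t : ℝ, 0 ≤ t → (t : EReal) < min T (Tc5 ν g r₀) →
      W t ≤ r₀ * Real.exp (-ν * t) / (1 - g * r₀ * eNu ν t) :=
  stmt6_general ν g r₀ hν hg T W hWc hW0 hW
end

section
/- Fix an integer d ≥ 2, ν ∈ [0,∞), T ∈ (0,+∞], and a finite set G ⊂ ℤ^d∖{0} with G = −G. Let f_k : [0,T) → ℂ^d (k ∈ G) be continuous, and let γ = (γ_k)_{k∈G} be a C¹ solution on [0,T) of the Galerkin component system dγ_k/dt = −ν|k|²γ_k − i(2π)^{−d/2} ∑_{h∈G} (γ_h·(k−h))·P_k γ_{k−h} + f_k (k ∈ G, γ_j := 0 for j ∉ G) such that for every t ∈ [0,T) and k ∈ G one has conj(γ_k(t)) = γ_{−k}(t) and k·γ_k(t) = 0. Then the continuous function N(t) := √(∑_{k∈G} |γ_k(t)|²) satisfies d⁺N/dt(t) ≤ −ν·N(t) + √(∑_{k∈G} |f_k(t)|²) for every t ∈ [0,T). -/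
open Filter Set Finset

/-- `k·c := ∑_r k_r c_r` (no complex conjugation). -/
noncomputable def zcDot {d : ℕ} (k : Fin d → ℤ) (c : Fin d → ℂ) : ℂ := ∑ r, (k r : ℂ) * c r

/-- `|k|²`, the squared Euclidean norm of `k ∈ ℤ^d`. -/
def zNormSq {d : ℕ} (k : Fin d → ℤ) : ℤ := ∑ r, (k r) ^ 2

/-- `P_k c := c − (k·c)·k/|k|²`, the projection of `ℂ^d` onto the orthogonal
complement of `k`. -/
noncomputable def projPerp {d : ℕ} (k : Fin d → ℤ) (c : Fin d → ℂ) : Fin d → ℂ :=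
  fun r => c r - zcDot k c * (k r : ℂ) / (zNormSq k : ℂ)

/-- The right-hand side of the Galerkin component system:
`−ν|k|²γ_k − i(2π)^{−d/2} ∑_{h∈G} (γ_h·(k−h))·P_k γ_{k−h} + f_k`. -/
noncomputable def galRHS (d : ℕ) (ν : ℝ) (G : Finset (Fin d → ℤ))
    (f : (Fin d → ℤ) → ℝ → Fin d → ℂ) (γ : (Fin d → ℤ) → ℝ → Fin d → ℂ)
    (k : Fin d → ℤ) (t : ℝ) : Fin d → ℂ :=
  fun r =>
    -((ν : ℂ) * (zNormSq k : ℂ)) * γ k t r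
      - Complex.I * (((2 * Real.pi) ^ (-(d : ℝ) / 2) : ℝ) : ℂ) *
        ∑ h ∈ G, zcDot (k - h) (γ h t) * projPerp k (γ (k - h) t) r
      + f k t r

/-!
View `U(t) = (γ_k(t))_{k ∈ G}` as a vector of `ℓ²(G × Fin d)`, so that `N = ‖U‖`, and split the
right-hand side as `U' = D + f`, where `D` is the damping plus the convective term. The convective
term is orthogonal to `U` (once `conj γ_k = γ_{-k}` and `k·γ_{-k} = 0` have removed the conjugation
and the projection `P_k`), and `|k|² ≥ 1` on `G` gives `⟪U, D⟫ ≤ -ν‖U‖²`. Where `U ≠ 0` the norm is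
differentiable with derivative `⟪U, U'⟫/‖U‖ ≤ -ν‖U‖ + ‖f‖` by Cauchy–Schwarz; where `U = 0` also
`D = 0`, and the Dini derivative of `‖U‖` is `‖U'‖ = ‖f‖`.
-/

open Topology ComplexConjugate Matrix

section RightDiniDerivative

variable {F : Type*} [NormedAddCommGroup F]

theorem HasDerivWithinAt.tendsto_slope_zero_right [NormedSpace ℝ F] {f : ℝ → F} {f' : F} {x : ℝ}
    (h : HasDerivWithinAt f f' (Ioi x) x) :
    Tendsto (fun s ↦ s⁻¹ • (f (x + s) - f x)) (𝓝[>] 0) (𝓝 f') := by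
  have hshift : Tendsto (x + ·) (𝓝[>] (0 : ℝ)) (𝓝[>] x) := by
    rw [Tendsto, map_add_left_nhdsGT, add_zero]
  simpa [Function.comp_def, slope_def_module] using
    ((hasDerivWithinAt_iff_tendsto_slope' self_notMem_Ioi).1 h).comp hshift

theorem diniUpper_eq_of_tendsto {N : ℝ → ℝ} {t L : ℝ}
    (h : Tendsto (fun s ↦ (N (t + s) - N t) / s) (𝓝[>] 0) (𝓝 L)) : diniUpper N t = L :=
  (EReal.tendsto_coe.2 h).limsup_eq

theorem diniUpper_eq_of_hasDerivWithinAt {N : ℝ → ℝ} {t L : ℝ}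
    (h : HasDerivWithinAt N L (Ioi t) t) : diniUpper N t = L :=
  diniUpper_eq_of_tendsto <| by simpa [div_eq_inv_mul] using h.tendsto_slope_zero_right

theorem diniUpper_norm_of_eq_zero [NormedSpace ℝ F] {U : ℝ → F} {U' : F} {t : ℝ}
    (hU : HasDerivWithinAt U U' (Ioi t) t) (h0 : U t = 0) :
    diniUpper (fun τ ↦ ‖U τ‖) t = ‖U'‖ := by
  refine diniUpper_eq_of_tendsto (hU.tendsto_slope_zero_right.norm.congr' ?_)
  filter_upwards [self_mem_nhdsWithin] with s (hs : 0 < s)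
  rw [h0, sub_zero, norm_zero, sub_zero, norm_smul, Real.norm_of_nonneg (inv_nonneg.2 hs.le),
    div_eq_inv_mul]

theorem diniUpper_norm_of_ne_zero [InnerProductSpace ℝ F] {U : ℝ → F} {U' : F} {t : ℝ}
    (hU : HasDerivWithinAt U U' (Ioi t) t) (h0 : U t ≠ 0) :
    diniUpper (fun τ ↦ ‖U τ‖) t = ((inner ℝ (U t) U' / ‖U t‖ : ℝ) : EReal) := by
  have h := hU.norm_sq.sqrt (by positivity)
  simp only [Real.sqrt_sq (norm_nonneg _)] at h
  rw [diniUpper_eq_of_hasDerivWithinAt h, mul_div_mul_left _ _ two_ne_zero]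

theorem diniUpper_norm_le [InnerProductSpace ℝ F] {U : ℝ → F} {D g : F} {t ν : ℝ}
    (hU : HasDerivWithinAt U (D + g) (Ioi t) t) (hD : inner ℝ (U t) D ≤ -ν * ‖U t‖ ^ 2)
    (hD0 : U t = 0 → D = 0) :
    diniUpper (fun τ ↦ ‖U τ‖) t ≤ ((-ν * ‖U t‖ + ‖g‖ : ℝ) : EReal) := by
  by_cases h0 : U t = 0
  · rw [diniUpper_norm_of_eq_zero hU h0, hD0 h0, h0, zero_add, norm_zero, mul_zero, zero_add]
  · have hpos : 0 < ‖U t‖ := norm_pos_iff.2 h0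
    rw [diniUpper_norm_of_ne_zero hU h0, EReal.coe_le_coe_iff, div_le_iff₀ hpos, inner_add_right]
    nlinarith [real_inner_le_norm (U t) g]

end RightDiniDerivative

section Galerkin

variable {d : ℕ}

theorem zcDot_add_left (a b : Fin d → ℤ) (c : Fin d → ℂ) :
    zcDot (a + b) c = zcDot a c + zcDot b c := by
  simp only [zcDot, Pi.add_apply, Int.cast_add, add_mul, Finset.sum_add_distrib]

theorem zcDot_neg_left (a : Fin d → ℤ) (c : Fin d → ℂ) : zcDot (-a) c = -zcDot a c := by
  simp only [zcDot, Pi.neg_apply, Int.cast_neg, neg_mul, Finset.sum_neg_distrib]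

theorem one_le_zNormSq {k : Fin d → ℤ} (hk : k ≠ 0) : 1 ≤ zNormSq k := by
  obtain ⟨r, hr⟩ := Function.ne_iff.1 hk
  have : 0 < k r ^ 2 := sq_pos_of_ne_zero hr
  have : k r ^ 2 ≤ zNormSq k :=
    Finset.single_le_sum (f := fun r ↦ k r ^ 2) (fun _ _ ↦ sq_nonneg _) (Finset.mem_univ r)
  omega

theorem dotProduct_projPerp {k : Fin d → ℤ} {w : Fin d → ℂ} (hw : zcDot k w = 0)
    (c : Fin d → ℂ) : w ⬝ᵥ projPerp k c = w ⬝ᵥ c := by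
  have hkw : ∑ r, w r * (k r : ℂ) = 0 := by
    rw [← hw, zcDot]; exact Finset.sum_congr rfl fun r _ ↦ mul_comm _ _
  simp only [dotProduct, projPerp, mul_sub, Finset.sum_sub_distrib, sub_eq_self]
  simp only [mul_div_assoc', mul_left_comm (w _), ← Finset.sum_div, ← Finset.mul_sum, hkw,
    mul_zero, zero_div]

theorem Finset.sum_comp_sub_left {α M : Type*} [AddCommGroup α] [AddCommMonoid M]
    {s : Finset α} {f : α → M} (h : α) (hf : ∀ k ∉ s, f k = 0) (hf' : ∀ k ∉ s, f (h - k) = 0) :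
    ∑ k ∈ s, f (h - k) = ∑ k ∈ s, f k := by
  rw [← finsum_eq_sum_of_support_subset _ fun k hk ↦ by_contra fun hks ↦ hk (hf' k hks),
    ← finsum_eq_sum_of_support_subset _ fun k hk ↦ by_contra fun hks ↦ hk (hf k hks)]
  exact finsum_comp_equiv (Equiv.subLeft h)

/-- The quadratic term `∑_{h∈G} (u_h·(k−h)) P_k u_{k−h}` of the Galerkin system. -/
noncomputable def galNonlinear (G : Finset (Fin d → ℤ)) (u : (Fin d → ℤ) → Fin d → ℂ)
    (k : Fin d → ℤ) (r : Fin d) : ℂ :=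
  ∑ h ∈ G, zcDot (k - h) (u h) * projPerp k (u (k - h)) r

variable {G : Finset (Fin d → ℤ)} {u : (Fin d → ℤ) → Fin d → ℂ}

theorem Finset.neg_notMem_of_notMem {α : Type*} [InvolutiveNeg α] {s : Finset α}
    (hs : ∀ a ∈ s, -a ∈ s) {a : α} (ha : a ∉ s) : -a ∉ s :=
  fun hna ↦ ha (neg_neg a ▸ hs _ hna)

/-- The substitution `k ↦ h - k` preserves the sum and turns the coefficient `(k - h)·u_h` into
`(-k)·u_h`; the two add up to `-h·u_h = 0`. -/
theorem sum_zcDot_mul_dotProduct_eq_zero (hGsym : ∀ k ∈ G, -k ∈ G) (hu0 : ∀ j ∉ G, u j = 0)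
    {h : Fin d → ℤ} (hh : zcDot h (u h) = 0) :
    ∑ k ∈ G, zcDot (k - h) (u h) * (u (-k) ⬝ᵥ u (k - h)) = 0 := by
  set A := fun k ↦ zcDot (k - h) (u h) * (u (-k) ⬝ᵥ u (k - h))
  have hA : ∀ k ∉ G, A k = 0 := fun k hk ↦ by
    simp [A, hu0 _ (Finset.neg_notMem_of_notMem hGsym hk)]
  have hA' : ∀ k ∉ G, A (h - k) = 0 := fun k hk ↦ by
    simp [A, hu0 _ (Finset.neg_notMem_of_notMem hGsym hk)]
  have hpair : ∀ k, A k + A (h - k) = 0 := fun k ↦ by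
    simp only [A, sub_sub_cancel_left, neg_sub, dotProduct_comm (u (k - h))]
    rw [← add_mul, ← zcDot_add_left, show k - h + -k = -h by abel, zcDot_neg_left, hh,
      neg_zero, zero_mul]
  have hsum : ∑ k ∈ G, A k + ∑ k ∈ G, A (h - k) = 0 := by
    rw [← Finset.sum_add_distrib]
    exact Finset.sum_eq_zero fun k _ ↦ hpair k
  rw [Finset.sum_comp_sub_left h hA hA'] at hsum
  exact add_self_eq_zero.1 hsum

theorem sum_conj_mul_galNonlinear_eq_zero (hGsym : ∀ k ∈ G, -k ∈ G)
    (hu0 : ∀ j ∉ G, u j = 0) (hconj : ∀ k ∈ G, ∀ r, conj (u k r) = u (-k) r)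
    (hdiv : ∀ k ∈ G, zcDot k (u k) = 0) :
    ∑ k ∈ G, ∑ r, conj (u k r) * galNonlinear G u k r = 0 := by
  have hk : ∀ k ∈ G, ∑ r, conj (u k r) * galNonlinear G u k r
      = ∑ h ∈ G, zcDot (k - h) (u h) * (u (-k) ⬝ᵥ u (k - h)) := fun k hk ↦ by
    have hk' : zcDot k (u (-k)) = 0 := by
      simpa [zcDot_neg_left] using hdiv (-k) (hGsym k hk)
    simp only [hconj k hk, galNonlinear, Finset.mul_sum]
    rw [Finset.sum_comm]
    refine Finset.sum_congr rfl fun h _ ↦ ?_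
    rw [← dotProduct_projPerp hk', dotProduct, Finset.mul_sum]
    exact Finset.sum_congr rfl fun r _ ↦ by ring
  rw [Finset.sum_congr rfl hk, Finset.sum_comm]
  exact Finset.sum_eq_zero fun h hh ↦ sum_zcDot_mul_dotProduct_eq_zero hGsym hu0 (hdiv h hh)

end Galerkin

section L2

variable {d : ℕ} (G : Finset (Fin d → ℤ))

noncomputable def toL2 (v : (Fin d → ℤ) → Fin d → ℂ) : EuclideanSpace ℂ (G × Fin d) :=
  WithLp.toLp 2 fun p ↦ v p.1 p.2

theorem toL2_add (v w : (Fin d → ℤ) → Fin d → ℂ) : toL2 G (v + w) = toL2 G v + toL2 G w :=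
  rfl

theorem real_inner_toL2 (v w : (Fin d → ℤ) → Fin d → ℂ) :
    inner ℝ (toL2 G v) (toL2 G w) = (∑ k ∈ G, ∑ r, conj (v k r) * w k r).re := by
  rw [PiLp.inner_apply, Fintype.sum_prod_type, ← Finset.sum_coe_sort G]
  simp [toL2, Complex.re_sum, mul_comm]

theorem norm_toL2 (v : (Fin d → ℤ) → Fin d → ℂ) :
    ‖toL2 G v‖ = √(∑ k ∈ G, ∑ r, Complex.normSq (v k r)) := by
  rw [EuclideanSpace.norm_eq, Fintype.sum_prod_type, ← Finset.sum_coe_sort G]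
  simp [toL2, Complex.normSq_eq_norm_sq]

theorem toL2_eq_zero_iff {v : (Fin d → ℤ) → Fin d → ℂ} : toL2 G v = 0 ↔ ∀ k ∈ G, v k = 0 := by
  simp [toL2, ← WithLp.toLp_zero, funext_iff]

theorem hasDerivWithinAt_toL2 {γ : (Fin d → ℤ) → ℝ → Fin d → ℂ}
    {γ' : (Fin d → ℤ) → Fin d → ℂ} {s : Set ℝ} {t : ℝ}
    (h : ∀ k ∈ G, HasDerivWithinAt (γ k) (γ' k) s t) :
    HasDerivWithinAt (fun τ ↦ toL2 G (γ · τ)) (toL2 G γ') s t := by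
  have hpi : HasDerivWithinAt (fun τ (p : G × Fin d) ↦ γ p.1 τ p.2) (fun p ↦ γ' p.1 p.2) s t :=
    hasDerivWithinAt_pi.2 fun p ↦ hasDerivWithinAt_pi.1 (h p.1 p.1.2) p.2
  exact (PiLp.hasStrictFDerivAt_toLp (𝕜 := ℝ) 2 _).hasFDerivAt.comp_hasDerivWithinAt t hpi

end L2

section Energy

variable {d : ℕ} {G : Finset (Fin d → ℤ)}

theorem real_inner_toL2_damping_le {ν : ℝ} (hν : 0 ≤ ν) (hG0 : 0 ∉ G)
    (u : (Fin d → ℤ) → Fin d → ℂ) :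
    inner ℝ (toL2 G u) (toL2 G fun k r ↦ -((ν : ℂ) * zNormSq k) * u k r)
      ≤ -ν * ‖toL2 G u‖ ^ 2 := by
  rw [real_inner_toL2, norm_toL2, Real.sq_sqrt (Finset.sum_nonneg fun _ _ ↦
    Finset.sum_nonneg fun _ _ ↦ Complex.normSq_nonneg _), Finset.mul_sum, Complex.re_sum]
  refine Finset.sum_le_sum fun k hk ↦ ?_
  rw [Finset.mul_sum, Complex.re_sum]
  refine Finset.sum_le_sum fun r _ ↦ ?_
  have hk : (1 : ℝ) ≤ zNormSq k := mod_cast one_le_zNormSq (ne_of_mem_of_not_mem hk hG0)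
  have hre : (conj (u k r) * (-((ν : ℂ) * zNormSq k) * u k r)).re
      = -(ν * zNormSq k) * Complex.normSq (u k r) := by
    rw [mul_left_comm, ← Complex.normSq_eq_conj_mul_self]
    norm_cast
  rw [hre]
  nlinarith [mul_nonneg (mul_nonneg hν (sub_nonneg.2 hk)) (Complex.normSq_nonneg (u k r))]

theorem real_inner_toL2_galNonlinear_eq_zero {u : (Fin d → ℤ) → Fin d → ℂ}
    (hGsym : ∀ k ∈ G, -k ∈ G) (hu0 : ∀ j ∉ G, u j = 0)
    (hconj : ∀ k ∈ G, ∀ r, conj (u k r) = u (-k) r) (hdiv : ∀ k ∈ G, zcDot k (u k) = 0)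
    (a : ℂ) : inner ℝ (toL2 G u) (toL2 G fun k r ↦ a * galNonlinear G u k r) = 0 := by
  simp only [real_inner_toL2, mul_left_comm _ a, ← Finset.mul_sum,
    sum_conj_mul_galNonlinear_eq_zero hGsym hu0 hconj hdiv, mul_zero, Complex.zero_re]

end Energy

theorem setOf_nonneg_and_coe_lt_mem_nhdsGT {T : EReal} {t : ℝ} (ht0 : 0 ≤ t)
    (htT : (t : EReal) < T) : {τ : ℝ | 0 ≤ τ ∧ (τ : EReal) < T} ∈ 𝓝[>] t :=
  inter_mem (mem_of_superset self_mem_nhdsWithin fun _ hτ ↦ ht0.trans (le_of_lt hτ))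
    (nhdsWithin_le_nhds ((isOpen_lt continuous_coe_real_ereal continuous_const).mem_nhds htT))

theorem stmt12_general (d : ℕ) (ν : ℝ) (hν : 0 ≤ ν) (T : EReal)
    (G : Finset (Fin d → ℤ)) (hG0 : (0 : Fin d → ℤ) ∉ G) (hGsym : ∀ k ∈ G, -k ∈ G)
    (f : (Fin d → ℤ) → ℝ → Fin d → ℂ)
    (γ : (Fin d → ℤ) → ℝ → Fin d → ℂ)
    (hγ0 : ∀ j, j ∉ G → ∀ t : ℝ, γ j t = 0)
    (hODE : ∀ k ∈ G, ∀ t : ℝ, 0 ≤ t → (t : EReal) < T →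
      HasDerivWithinAt (γ k) (galRHS d ν G f γ k t) {τ : ℝ | 0 ≤ τ ∧ (τ : EReal) < T} t)
    (hconj : ∀ k ∈ G, ∀ t : ℝ, 0 ≤ t → (t : EReal) < T →
      ∀ r, (starRingEnd ℂ) (γ k t r) = γ (-k) t r)
    (hdiv : ∀ k ∈ G, ∀ t : ℝ, 0 ≤ t → (t : EReal) < T → zcDot k (γ k t) = 0) :
    ∀ t : ℝ, 0 ≤ t → (t : EReal) < T →
      diniUpper (fun τ => Real.sqrt (∑ k ∈ G, ∑ r, Complex.normSq (γ k τ r))) t ≤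
        ((-ν * Real.sqrt (∑ k ∈ G, ∑ r, Complex.normSq (γ k t r))
          + Real.sqrt (∑ k ∈ G, ∑ r, Complex.normSq (f k t r)) : ℝ) : EReal) := by
  intro t ht0 htT
  set u : (Fin d → ℤ) → Fin d → ℂ := (γ · t)
  set D : (Fin d → ℤ) → Fin d → ℂ := (fun k r ↦ -((ν : ℂ) * zNormSq k) * u k r) + fun k r ↦
    -(Complex.I * (((2 * Real.pi) ^ (-(d : ℝ) / 2) : ℝ) : ℂ)) * galNonlinear G u k r
  have hderiv :
      HasDerivWithinAt (fun τ ↦ toL2 G (γ · τ)) (toL2 G D + toL2 G (f · t)) (Ioi t) t := by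
    rw [← toL2_add]
    refine hasDerivWithinAt_toL2 G fun k hk ↦ ?_
    refine ((hODE k hk t ht0 htT).mono_of_mem_nhdsWithin
      (setOf_nonneg_and_coe_lt_mem_nhdsGT ht0 htT)).congr_deriv (funext fun r ↦ ?_)
    simp only [galRHS, D, galNonlinear, u, Pi.add_apply]
    ring
  have hD : inner ℝ (toL2 G u) (toL2 G D) ≤ -ν * ‖toL2 G u‖ ^ 2 := by
    rw [toL2_add, inner_add_right, real_inner_toL2_galNonlinear_eq_zero hGsym
      (fun j hj ↦ hγ0 j hj t) (fun k hk ↦ hconj k hk t ht0 htT) (fun k hk ↦ hdiv k hk t ht0 htT),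
      add_zero]
    exact real_inner_toL2_damping_le hν hG0 u
  have hD0 : toL2 G u = 0 → toL2 G D = 0 := by
    intro h0
    have hu : u = 0 := funext fun k ↦
      if hk : k ∈ G then (toL2_eq_zero_iff G).1 h0 k hk else hγ0 k hk t
    refine (toL2_eq_zero_iff G).2 fun k _ ↦ funext fun r ↦ ?_
    simp [D, hu, galNonlinear, projPerp, zcDot]
  simpa only [norm_toL2] using diniUpper_norm_le hderiv hD hD0

/-- Step 3 of Appendix B of the paper: the L² norm of the Galerkin approximant
satisfies `d⁺N/dt ≤ −νN + ‖f‖_{L²}`. -/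
theorem stmt12 (d : ℕ) (hd : 2 ≤ d) (ν : ℝ) (hν : 0 ≤ ν) (T : EReal) (hT : 0 < T)
    (G : Finset (Fin d → ℤ)) (hG0 : (0 : Fin d → ℤ) ∉ G) (hGsym : ∀ k ∈ G, -k ∈ G)
    (f : (Fin d → ℤ) → ℝ → Fin d → ℂ)
    (hfc : ∀ k ∈ G, ContinuousOn (f k) {t : ℝ | 0 ≤ t ∧ (t : EReal) < T})
    (γ : (Fin d → ℤ) → ℝ → Fin d → ℂ)
    (hγ0 : ∀ j, j ∉ G → ∀ t : ℝ, γ j t = 0)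
    (hODE : ∀ k ∈ G, ∀ t : ℝ, 0 ≤ t → (t : EReal) < T →
      HasDerivWithinAt (γ k) (galRHS d ν G f γ k t) {τ : ℝ | 0 ≤ τ ∧ (τ : EReal) < T} t)
    (hconj : ∀ k ∈ G, ∀ t : ℝ, 0 ≤ t → (t : EReal) < T →
      ∀ r, (starRingEnd ℂ) (γ k t r) = γ (-k) t r)
    (hdiv : ∀ k ∈ G, ∀ t : ℝ, 0 ≤ t → (t : EReal) < T → zcDot k (γ k t) = 0) :
    ∀ t : ℝ, 0 ≤ t → (t : EReal) < T →
      diniUpper (fun τ => Real.sqrt (∑ k ∈ G, ∑ r, Complex.normSq (γ k τ r))) t ≤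
        ((-ν * Real.sqrt (∑ k ∈ G, ∑ r, Complex.normSq (γ k t r))
          + Real.sqrt (∑ k ∈ G, ∑ r, Complex.normSq (f k t r)) : ℝ) : EReal) :=
  stmt12_general d ν hν T G hG0 hGsym f γ hγ0 hODE hconj hdiv
end
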